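/- For every 2π-periodic p ∈ W^{1,1}_loc(ℝ) and every r > 0, the integral over one period satisfies ∫_{2π}^{4π} 𝔭_r[p]'(t) · p(t) dt ≥ 0. -/
import Mathlib


open MeasureTheory Set

/-- `IsPlayLoc r p ξ ξ'` : `ξ` (locally `W^{1,1}` on `[0,∞)`, with a.e. derivative `ξ'`)
solves the play variational inequality with input `p` and memory parameter `r` on `[0,∞)`. -/
def IsPlayLoc (r : ℝ) (p ξ ξ' : ℝ → ℝ) : Prop :=
  (∀ T > (0:ℝ), IntervalIntegrable ξ' volume 0 T) ∧
  (∀ t ∈ Set.Ici (0:ℝ), ξ t = ξ 0 + ∫ s in (0:ℝ)..t, ξ' s) ∧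
  (∀ t ∈ Set.Ici (0:ℝ), |p t - ξ t| ≤ r) ∧
  (∀ᵐ t ∂(volume.restrict (Set.Ici (0:ℝ))),
      ∀ z ∈ Set.Icc (-r) r, 0 ≤ ξ' t * (p t - ξ t - z)) ∧
  p 0 - ξ 0 = max (-r) (min (p 0) r)

/-- Self convolution identity: `∫ₐᵇ f(t) (∫ₐᵗ f) dt = (∫ₐᵇ f)² / 2`, proved via Fubini
on the triangle. -/
lemma half_sq_aux (f : ℝ → ℝ) (a b : ℝ) (hab : a ≤ b)
    (hf : IntervalIntegrable f volume a b) :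
    2 * ∫ t in a..b, f t * (∫ s in a..t, f s) = (∫ t in a..b, f t)^2 := by
  set μ : Measure ℝ := volume.restrict (Ioc a b) with hμ
  have hfi : IntegrableOn f (Ioc a b) volume :=
    (intervalIntegrable_iff_integrableOn_Ioc_of_le hab).1 hf
  set H : ℝ × ℝ → ℝ := ({q : ℝ × ℝ | q.2 ≤ q.1}).indicator (fun q => f q.1 * f q.2) with hH
  have hHint : Integrable H (μ.prod μ) :=
    (hfi.mul_prod hfi).indicator (measurableSet_le measurable_snd measurable_fst)
  -- the primitive
  set F : ℝ → ℝ := fun t => ∫ s in a..t, f s with hF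
  have hFcont : ContinuousOn F (Set.uIcc a b) :=
    intervalIntegral.continuousOn_primitive_interval' hf Set.left_mem_uIcc
  have hfF : IntervalIntegrable (fun t => f t * F t) volume a b :=
    hf.mul_continuousOn hFcont
  have hfFi : IntegrableOn (fun t => f t * F t) (Ioc a b) volume :=
    (intervalIntegrable_iff_integrableOn_Ioc_of_le hab).1 hfF
  set I : ℝ := ∫ t in a..b, f t * F t with hI
  set Fb : ℝ := ∫ t in a..b, f t with hFb
  -- Step A: I as an iterated integral of H
  have stepA : I = ∫ t, (∫ s, H (t, s) ∂μ) ∂μ := by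
    rw [hI, intervalIntegral.integral_of_le hab]
    refine setIntegral_congr_fun measurableSet_Ioc (fun t ht => ?_)
    have h1 : ∀ s : ℝ, H (t, s) = (Set.Iic t).indicator (fun s => f t * f s) s := by
      intro s
      by_cases h : s ≤ t <;>
        simp [hH, Set.indicator, h, Set.mem_setOf_eq, Set.mem_Iic]
    calc f t * F t = f t * ∫ s in Ioc a t, f s := by
            simp only [hF, intervalIntegral.integral_of_le ht.1.le]
      _ = ∫ s in Ioc a t, f t * f s := (integral_const_mul (f t) f).symm
      _ = ∫ s in Iic t, (f t * f s) ∂μ := by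
            rw [hμ, Measure.restrict_restrict measurableSet_Iic,
              Set.Iic_inter_Ioc_of_le ht.2]
      _ = ∫ s, (Set.Iic t).indicator (fun s => f t * f s) s ∂μ := by
            rw [integral_indicator measurableSet_Iic]
      _ = ∫ s, H (t, s) ∂μ := by simp_rw [h1]
  -- Step B: swap
  have stepB : (∫ t, (∫ s, H (t, s) ∂μ) ∂μ) = ∫ s, (∫ t, H (t, s) ∂μ) ∂μ :=
    integral_integral_swap hHint
  -- Step C: inner integral after swap
  have stepC : (∫ s, (∫ t, H (t, s) ∂μ) ∂μ) = ∫ s, f s * (Fb - F s) ∂μ := by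
    rw [hμ]
    refine setIntegral_congr_fun measurableSet_Ioc (fun s hs => ?_)
    have h1 : ∀ t : ℝ, H (t, s) = (Set.Ici s).indicator (fun t => f t * f s) t := by
      intro t
      by_cases h : s ≤ t <;>
        simp [hH, Set.indicator, h, Set.mem_setOf_eq, Set.mem_Ici]
    have hset : Set.Ici s ∩ Set.Ioc a b = Set.Icc s b := by
      ext x
      simp only [Set.mem_inter_iff, Set.mem_Ici, Set.mem_Ioc, Set.mem_Icc]
      exact ⟨fun h => ⟨h.1, h.2.2⟩, fun h => ⟨h.1, lt_of_lt_of_le hs.1 h.1, h.2⟩⟩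
    have hsplit : Fb = F s + ∫ t in s..b, f t := by
      rw [hFb, hF]
      exact (intervalIntegral.integral_add_adjacent_intervals
        (hf.mono_set (Set.uIcc_subset_uIcc Set.left_mem_uIcc ⟨by simp [hs.1.le, hab],
          by simp [hs.2, hab]⟩))
        (hf.mono_set (Set.uIcc_subset_uIcc ⟨by simp [hs.1.le, hab],
          by simp [hs.2, hab]⟩ Set.right_mem_uIcc))).symm
    calc (∫ t, H (t, s) ∂μ)
        = ∫ t, (Set.Ici s).indicator (fun t => f t * f s) t ∂μ := by simp_rw [h1]
      _ = ∫ t in Set.Ici s, (f t * f s) ∂μ := by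
            rw [integral_indicator measurableSet_Ici]
      _ = ∫ t in Set.Icc s b, f t * f s := by
            rw [hμ, Measure.restrict_restrict measurableSet_Ici, hset]
      _ = ∫ t in Set.Ioc s b, f t * f s := integral_Icc_eq_integral_Ioc
      _ = (∫ t in Set.Ioc s b, f t) * f s := integral_mul_const (f s) f
      _ = (∫ t in s..b, f t) * f s := by
            rw [intervalIntegral.integral_of_le hs.2]
      _ = f s * (Fb - F s) := by rw [hsplit]; ring
  -- Step D: compute the right-hand side
  have stepD : (∫ s, f s * (Fb - F s) ∂μ) = Fb ^ 2 - I := by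
    have e1 : ∀ s : ℝ, f s * (Fb - F s) = f s * Fb - f s * F s := fun s => by ring
    simp_rw [e1]
    rw [integral_sub (hfi.mul_const Fb) hfFi, integral_mul_const]
    rw [hI, intervalIntegral.integral_of_le hab, hFb,
      intervalIntegral.integral_of_le hab]
    ring
  have : I = Fb ^ 2 - I := stepA.trans (stepB.trans (stepC.trans stepD))
  have h2 : 2 * I = Fb ^ 2 := by linarith
  simpa [hI, hFb] using h2

/-- For every `2π`-periodic `p ∈ W^{1,1}_loc` and every `r > 0`, the play output satisfies
`∫_{2π}^{4π} 𝔭_r[p]'(t)·p(t) dt ≥ 0`. -/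
theorem play_cycle_nonneg (r : ℝ) (hr : 0 < r)
    (p p' ξ ξ' : ℝ → ℝ)
    (hp' : ∀ T > (0:ℝ), IntervalIntegrable p' volume 0 T)
    (hp : ∀ t ∈ Set.Ici (0:ℝ), p t = p 0 + ∫ s in (0:ℝ)..t, p' s)
    (hpper : ∀ t ∈ Set.Ici (0:ℝ), p (t + 2 * Real.pi) = p t)
    (hξ : IsPlayLoc r p ξ ξ')
    -- the play output is `2π`-periodic from time `2π` on:
    (hξper : ∀ t ∈ Set.Ici (2 * Real.pi), ξ (t + 2 * Real.pi) = ξ t) :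
    0 ≤ ∫ t in (2 * Real.pi)..(4 * Real.pi), ξ' t * p t := by
  obtain ⟨hξint, hξftc, hξbd, hξvar, hξ0⟩ := hξ
  have hpi : 0 < Real.pi := Real.pi_pos
  set a : ℝ := 2 * Real.pi with ha
  set b : ℝ := 4 * Real.pi with hb
  have ha0 : (0:ℝ) < a := by positivity
  have hb0 : (0:ℝ) < b := by positivity
  have hab : a ≤ b := by rw [ha, hb]; nlinarith
  have hsub : Set.uIcc a b ⊆ Set.uIcc (0:ℝ) b :=
    Set.uIcc_subset_uIcc ⟨by simp [ha0.le, hb0.le], by simp [hab, hb0.le]⟩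
      Set.right_mem_uIcc
  have hIcc_sub : Set.uIcc a b ⊆ Set.Ici (0:ℝ) := by
    rw [Set.uIcc_of_le hab]
    exact fun x hx => le_trans ha0.le hx.1
  -- interval integrability of ξ' on [a,b]
  have hξ'ab : IntervalIntegrable ξ' volume a b := (hξint b hb0).mono_set hsub
  have hξ'0a : IntervalIntegrable ξ' volume 0 a := hξint a ha0
  -- ξ is continuous on [a,b]
  have hprim : ContinuousOn (fun t => ξ 0 + ∫ s in (0:ℝ)..t, ξ' s) (Set.uIcc a b) :=
    (continuousOn_const.add
      ((intervalIntegral.continuousOn_primitive_interval' (hξint b hb0)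
        Set.left_mem_uIcc))).mono hsub
  have hξcont : ContinuousOn ξ (Set.uIcc a b) :=
    hprim.congr (fun t ht => hξftc t (hIcc_sub ht))
  -- p is continuous on [a,b]
  have hpprim : ContinuousOn (fun t => p 0 + ∫ s in (0:ℝ)..t, p' s) (Set.uIcc a b) :=
    (continuousOn_const.add
      ((intervalIntegral.continuousOn_primitive_interval' (hp' b hb0)
        Set.left_mem_uIcc))).mono hsub
  have hpcont : ContinuousOn p (Set.uIcc a b) :=
    hpprim.congr (fun t ht => hp t (hIcc_sub ht))
  -- integrability of products
  have hint1 : IntervalIntegrable (fun t => ξ' t * ξ t) volume a b :=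
    hξ'ab.mul_continuousOn hξcont
  have hint2 : IntervalIntegrable (fun t => ξ' t * p t) volume a b :=
    hξ'ab.mul_continuousOn hpcont
  have hint3 : IntervalIntegrable (fun t => ξ' t * (p t - ξ t)) volume a b := by
    have : (fun t => ξ' t * (p t - ξ t)) =
        fun t => ξ' t * p t - ξ' t * ξ t := by funext t; ring
    rw [this]; exact hint2.sub hint1
  -- ξ b = ξ a by periodicity
  have hba : b = a + 2 * Real.pi := by rw [ha, hb]; ring
  have hξab : ξ b = ξ a := by
    rw [hba]; exact hξper a (by simp [ha])
  -- ∫ₐᵇ ξ' = ξ b - ξ a = 0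
  have hFb : (∫ t in a..b, ξ' t) = 0 := by
    have h1 : ξ a = ξ 0 + ∫ s in (0:ℝ)..a, ξ' s := hξftc a (le_of_lt ha0)
    have h2 : ξ b = ξ 0 + ∫ s in (0:ℝ)..b, ξ' s := hξftc b (le_of_lt hb0)
    have h3 : (∫ s in (0:ℝ)..a, ξ' s) + (∫ s in a..b, ξ' s) = ∫ s in (0:ℝ)..b, ξ' s :=
      intervalIntegral.integral_add_adjacent_intervals hξ'0a hξ'ab
    have := hξab
    rw [h1, h2, ← h3] at this
    linarith
  -- for t ∈ [a,b], decompose ξ t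
  have hξdecomp : ∀ t ∈ Set.uIcc a b, ξ t = ξ a + ∫ s in a..t, ξ' s := by
    intro t ht
    rw [Set.uIcc_of_le hab] at ht
    have h1 : ξ a = ξ 0 + ∫ s in (0:ℝ)..a, ξ' s := hξftc a (le_of_lt ha0)
    have h2 : ξ t = ξ 0 + ∫ s in (0:ℝ)..t, ξ' s := hξftc t (le_trans ha0.le ht.1)
    have hat : IntervalIntegrable ξ' volume a t :=
      hξ'ab.mono_set (Set.uIcc_subset_uIcc Set.left_mem_uIcc
        (by rw [Set.uIcc_of_le hab]; exact ht))
    have h3 : (∫ s in (0:ℝ)..a, ξ' s) + (∫ s in a..t, ξ' s) = ∫ s in (0:ℝ)..t, ξ' s :=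
      intervalIntegral.integral_add_adjacent_intervals hξ'0a hat
    rw [h1, h2, ← h3]; ring
  -- ∫ₐᵇ ξ' ξ = 0
  have hzero : (∫ t in a..b, ξ' t * ξ t) = 0 := by
    have hcongr : (∫ t in a..b, ξ' t * ξ t) =
        ∫ t in a..b, (ξ' t * ξ a + ξ' t * ∫ s in a..t, ξ' s) := by
      refine intervalIntegral.integral_congr (fun t ht => ?_)
      rw [hξdecomp t ht]; ring
    have hintc : IntervalIntegrable (fun t => ξ' t * ∫ s in a..t, ξ' s) volume a b :=
      hξ'ab.mul_continuousOn
        (intervalIntegral.continuousOn_primitive_interval' hξ'ab Set.left_mem_uIcc)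
    rw [hcongr, intervalIntegral.integral_add (hξ'ab.mul_const (ξ a)) hintc]
    have h1 : (∫ t in a..b, ξ' t * ξ a) = (∫ t in a..b, ξ' t) * ξ a :=
      intervalIntegral.integral_mul_const _ _
    have h2 : 2 * ∫ t in a..b, ξ' t * (∫ s in a..t, ξ' s) = (∫ t in a..b, ξ' t)^2 :=
      half_sq_aux ξ' a b hab hξ'ab
    rw [hFb] at h1 h2
    simp only [zero_mul] at h1
    rw [h1]
    nlinarith [h2]
  -- the dissipation term is nonnegative
  have hnonneg : 0 ≤ ∫ t in a..b, ξ' t * (p t - ξ t) := by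
    refine intervalIntegral.integral_nonneg_of_ae_restrict hab ?_
    have hsub2 : Set.Icc a b ⊆ Set.Ici (0:ℝ) := fun x hx => le_trans ha0.le hx.1
    have := ae_restrict_of_ae_restrict_of_subset hsub2 hξvar
    filter_upwards [this] with t ht
    have h0 : (0:ℝ) ∈ Set.Icc (-r) r := by constructor <;> linarith
    have := ht 0 h0
    simpa using this
  -- conclude
  have hsplit : (∫ t in a..b, ξ' t * p t) =
      (∫ t in a..b, ξ' t * (p t - ξ t)) + ∫ t in a..b, ξ' t * ξ t := by
    rw [← intervalIntegral.integral_add hint3 hint1]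
    refine intervalIntegral.integral_congr (fun t _ => ?_)
    ring
  rw [hsplit, hzero, add_zero]
  exact hnonneg
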